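/- arXiv:2506.01552 — 12 statements merged into one kernel-verified Lean document; each statement's English description precedes it below -/
import Mathlib

section
/- Let L be a finite nonempty set, let p : L → ℝ satisfy p(l) ≥ 0 for all l and Σ_{l∈L} p(l) = 1, and let Ln ⊆ L with Ln ≠ ∅ and Ln ≠ L. Let Cn, Cπ : L → ℝ satisfy Cn(l) > Cπ(l) for all l ∈ L\Ln and Cn(l) < Cπ(l) for all l ∈ Ln. Set M̄ = max_{l∈L\Ln} (Cn(l) − Cπ(l)) and m = min_{l∈Ln} (Cπ(l) − Cn(l)). If Σ_{l∈Ln} p(l) > M̄ / (M̄ + m), then Σ_{l∈L} p(l)·Cπ(l) > Σ_{l∈L} p(l)·Cn(l), i.e. the expected cost of the parent node strictly exceeds the expected cost of the node. -/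
/-! Split the expected cost difference `∑ p (Cπ - Cn)` over `Ln` and its complement: with
`q = ∑_{Ln} p`, it is at least `q m - (1 - q) M̄`, which is positive exactly when
`q > M̄ / (M̄ + m)`. Both `M̄` and `m` are attained, hence positive, so `M̄ + m > 0` and the
threshold can be cleared of its denominator. -/

open Finset

theorem Finset.mul_add_mul_le_sum_mul_of_forall_le {L : Type*} [Fintype L] [DecidableEq L]
    (s : Finset L) {p f : L → ℝ} (hp : ∀ l, 0 ≤ p l) {a b : ℝ}
    (ha : ∀ l ∈ s, a ≤ f l) (hb : ∀ l ∉ s, b ≤ f l) :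
    (∑ l ∈ s, p l) * a + (∑ l ∈ sᶜ, p l) * b ≤ ∑ l, p l * f l := by
  rw [← sum_add_sum_compl s, sum_mul, sum_mul]
  exact add_le_add (sum_le_sum fun l hl => mul_le_mul_of_nonneg_left (ha l hl) (hp l))
    (sum_le_sum fun l hl => mul_le_mul_of_nonneg_left (hb l (mem_compl.mp hl)) (hp l))

theorem lemma1_part1_general {L : Type*} [Fintype L]
    (p : L → ℝ) (hp : ∀ l, 0 ≤ p l) (hpsum : ∑ l, p l = 1)
    (Ln : Finset L)
    (Cn Cπ : L → ℝ)
    (hout : ∀ l ∉ Ln, Cπ l < Cn l)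
    (hin : ∀ l ∈ Ln, Cn l < Cπ l)
    (Mbar m : ℝ)
    (hMbar : IsGreatest {x : ℝ | ∃ l ∉ Ln, x = Cn l - Cπ l} Mbar)
    (hm : IsLeast {x : ℝ | ∃ l ∈ Ln, x = Cπ l - Cn l} m)
    (hthresh : Mbar / (Mbar + m) < ∑ l ∈ Ln, p l) :
    ∑ l, p l * Cn l < ∑ l, p l * Cπ l := by
  classical
  have hMbar_pos : 0 < Mbar := by
    obtain ⟨l, hl, rfl⟩ := hMbar.1
    exact sub_pos.mpr (hout l hl)
  have hm_pos : 0 < m := by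
    obtain ⟨l, hl, rfl⟩ := hm.1
    exact sub_pos.mpr (hin l hl)
  have hthresh' : Mbar < (∑ l ∈ Ln, p l) * (Mbar + m) :=
    (div_lt_iff₀ (by positivity)).mp hthresh
  have hcompl : ∑ l ∈ Lnᶜ, p l = 1 - ∑ l ∈ Ln, p l := by
    linarith [sum_add_sum_compl Ln p]
  have hlower := Ln.mul_add_mul_le_sum_mul_of_forall_le hp
    (f := fun l => Cπ l - Cn l) (a := m) (b := -Mbar)
    (fun l hl => hm.2 ⟨l, hl, rfl⟩)
    (fun l hl => by linarith [hMbar.2 ⟨l, hl, rfl⟩])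
  simp only [mul_sub, sum_sub_distrib, hcompl] at hlower
  linarith

/-- Part 1 of Lemma 1 (hierarchically reasonable metrics): if the probability of the
node `n` (i.e. `∑ l ∈ Ln, p l`) exceeds `M̄ / (M̄ + m)`, then the expected cost of the
parent strictly exceeds the expected cost of the node. -/
theorem lemma1_part1 {L : Type*} [Fintype L] [Nonempty L]
    (p : L → ℝ) (hp : ∀ l, 0 ≤ p l) (hpsum : ∑ l, p l = 1)
    (Ln : Finset L) (hLn : Ln.Nonempty) (hLn' : Ln ≠ Finset.univ)
    (Cn Cπ : L → ℝ)
    (hout : ∀ l ∉ Ln, Cπ l < Cn l)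
    (hin : ∀ l ∈ Ln, Cn l < Cπ l)
    (Mbar m : ℝ)
    (hMbar : IsGreatest {x : ℝ | ∃ l ∉ Ln, x = Cn l - Cπ l} Mbar)
    (hm : IsLeast {x : ℝ | ∃ l ∈ Ln, x = Cπ l - Cn l} m)
    (hthresh : Mbar / (Mbar + m) < ∑ l ∈ Ln, p l) :
    ∑ l, p l * Cn l < ∑ l, p l * Cπ l :=
  lemma1_part1_general p hp hpsum Ln Cn Cπ hout hin Mbar m hMbar hm hthresh
end

section
/- Let L be a finite nonempty set, let p : L → ℝ satisfy p(l) ≥ 0 for all l and Σ_{l∈L} p(l) = 1, and let Ln ⊆ L with Ln ≠ ∅ and Ln ≠ L. Let Cn, Cπ : L → ℝ satisfy Cn(l) > Cπ(l) for all l ∈ L\Ln and Cn(l) < Cπ(l) for all l ∈ Ln. Set m̄ = min_{l∈L\Ln} (Cn(l) − Cπ(l)) and M = max_{l∈Ln} (Cπ(l) − Cn(l)). If Σ_{l∈Ln} p(l) < m̄ / (m̄ + M), then Σ_{l∈L} p(l)·Cn(l) > Σ_{l∈L} p(l)·Cπ(l), i.e. the expected cost of the node strictly exceeds the expected cost of the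 parent node. -/
/-! Writing `q = ∑ l ∈ Ln, p l`, the expected gain `∑ p (Cn - Cπ)` is at least
`(1 - q) m̄ - q M = m̄ - q (m̄ + M)`: outside `Ln` every difference is at least `m̄`, inside it
is at least `-M`. The threshold says exactly that this lower bound is positive. -/

open Finset

theorem compl_sum_mul_sub_sum_mul_le_sum_mul {ι : Type*} [Fintype ι] [DecidableEq ι]
    (s : Finset ι) {p d : ι → ℝ} {m M : ℝ} (hp : ∀ i, 0 ≤ p i)
    (hout : ∀ i ∉ s, m ≤ d i) (hin : ∀ i ∈ s, -M ≤ d i) :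
    (∑ i ∈ sᶜ, p i) * m - (∑ i ∈ s, p i) * M ≤ ∑ i, p i * d i := by
  have hcompl : (∑ i ∈ sᶜ, p i) * m ≤ ∑ i ∈ sᶜ, p i * d i := by
    rw [sum_mul]
    exact sum_le_sum fun i hi ↦ mul_le_mul_of_nonneg_left (hout i (mem_compl.1 hi)) (hp i)
  have hs : -((∑ i ∈ s, p i) * M) ≤ ∑ i ∈ s, p i * d i := by
    rw [sum_mul, ← sum_neg_distrib]
    exact sum_le_sum fun i hi ↦ by
      simpa only [mul_neg] using mul_le_mul_of_nonneg_left (hin i hi) (hp i)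
  rw [← sum_add_sum_compl s]
  linarith

theorem lemma1_part2_general {L : Type*} [Fintype L]
    (p : L → ℝ) (hp : ∀ l, 0 ≤ p l) (hpsum : ∑ l, p l = 1)
    (Ln : Finset L)
    (Cn Cπ : L → ℝ)
    (hout : ∀ l ∉ Ln, Cπ l < Cn l)
    (mbar M : ℝ)
    (hmbar : IsLeast {x : ℝ | ∃ l ∉ Ln, x = Cn l - Cπ l} mbar)
    (hM : IsGreatest {x : ℝ | ∃ l ∈ Ln, x = Cπ l - Cn l} M)
    (hthresh : ∑ l ∈ Ln, p l < mbar / (mbar + M)) :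
    ∑ l, p l * Cπ l < ∑ l, p l * Cn l := by
  classical
  obtain ⟨⟨l₀, hl₀, hmbar_eq⟩, hmbar_le⟩ := hmbar
  set q := ∑ l ∈ Ln, p l
  have hmbar_pos : 0 < mbar := hmbar_eq ▸ sub_pos.2 (hout l₀ hl₀)
  have hden_pos : 0 < mbar + M :=
    (div_pos_iff_of_pos_left hmbar_pos).1 ((sum_nonneg fun l _ ↦ hp l).trans_lt hthresh)
  have hq : q * (mbar + M) < mbar := (lt_div_iff₀ hden_pos).1 hthresh
  have hcompl : ∑ l ∈ Lnᶜ, p l = 1 - q := by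
    rw [← hpsum, ← sum_add_sum_compl Ln p]
    ring
  have hgain := compl_sum_mul_sub_sum_mul_le_sum_mul Ln (d := fun l ↦ Cn l - Cπ l) hp
    (fun l hl ↦ hmbar_le ⟨l, hl, rfl⟩)
    (fun l hl ↦ neg_le.2 (by simpa only [neg_sub] using hM.2 ⟨l, hl, rfl⟩))
  simp only [hcompl, mul_sub, sum_sub_distrib] at hgain
  linarith

/-- Part 2 of Lemma 1 (hierarchically reasonable metrics): if the probability of the
node `n` (i.e. `∑ l ∈ Ln, p l`) is below `m̄ / (m̄ + M)`, then the expected cost of the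
node strictly exceeds the expected cost of the parent. -/
theorem lemma1_part2 {L : Type*} [Fintype L] [Nonempty L]
    (p : L → ℝ) (hp : ∀ l, 0 ≤ p l) (hpsum : ∑ l, p l = 1)
    (Ln : Finset L) (hLn : Ln.Nonempty) (hLn' : Ln ≠ Finset.univ)
    (Cn Cπ : L → ℝ)
    (hout : ∀ l ∉ Ln, Cπ l < Cn l)
    (hin : ∀ l ∈ Ln, Cn l < Cπ l)
    (mbar M : ℝ)
    (hmbar : IsLeast {x : ℝ | ∃ l ∉ Ln, x = Cn l - Cπ l} mbar)
    (hM : IsGreatest {x : ℝ | ∃ l ∈ Ln, x = Cπ l - Cn l} M)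
    (hthresh : ∑ l ∈ Ln, p l < mbar / (mbar + M)) :
    ∑ l, p l * Cπ l < ∑ l, p l * Cn l :=
  lemma1_part2_general p hp hpsum Ln Cn Cπ hout mbar M hmbar hM hthresh
end

section
/- Let L be a finite set, let p : L → ℝ satisfy p(l) ≥ 0 for all l and Σ_{l∈L} p(l) = 1, and let Ln ⊆ La ⊆ L with Ln ≠ ∅ and La\Ln ≠ ∅. Let Cn, Cπ : L → ℝ satisfy Cn(l) < Cπ(l) for all l ∈ Ln, Cn(l) > Cπ(l) for all l ∈ La\Ln, and Cn(l) = Cπ(l) for all l ∈ L\La. Set M̃̄ = max_{l∈La\Ln} (Cn(l) − Cπ(l)) and m̃ = min_{l∈Ln} (Cπ(l) − Cn(l)). If Σ_{l∈Ln} p(l) > (M̃̄ / (M̃̄ + m̃)) · Σ_{l∈La} p(l), then Σ_{l∈L} p(l)·Cπ(l) > Σ_{l∈L} p(l)·Cn(l). -/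
/-!
Write `Δ = Cπ - Cn`. The difference of expected costs is `∑ p Δ`, which only sees `La`. On `Ln`
we have `Δ ≥ m`, on `La \ Ln` we have `Δ ≥ -M̄`, so `∑ p Δ ≥ m P(Ln) - M̄ P(La \ Ln)
= (M̄ + m) P(Ln) - M̄ P(La)`, which is positive exactly by the threshold hypothesis.
-/

section

open Finset

variable {ι : Type*}

theorem sum_mul_sub_sum_mul_eq_sum_of_eqOn_compl [Fintype ι] (p f g : ι → ℝ) {s : Finset ι}
    (h : ∀ i ∉ s, f i = g i) :
    ∑ i, p i * g i - ∑ i, p i * f i = ∑ i ∈ s, p i * (g i - f i) := by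
  simp only [← sum_sub_distrib, ← mul_sub]
  exact (sum_subset (subset_univ s) fun i _ hi => by rw [h i hi, sub_self, mul_zero]).symm

theorem mul_sum_le_sum_mul_of_le {s : Finset ι} {w d : ι → ℝ} {c : ℝ}
    (hw : ∀ i ∈ s, 0 ≤ w i) (hc : ∀ i ∈ s, c ≤ d i) :
    c * ∑ i ∈ s, w i ≤ ∑ i ∈ s, w i * d i := by
  rw [mul_sum]
  exact sum_le_sum fun i hi => by rw [mul_comm]; exact mul_le_mul_of_nonneg_left (hc i hi) (hw i hi)

theorem sum_mul_pos_of_weight_gt [DecidableEq ι] {s u : Finset ι} (hsu : s ⊆ u)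
    {w d : ι → ℝ} {M m : ℝ} (hw : ∀ i, 0 ≤ w i) (hs : ∀ i ∈ s, m ≤ d i)
    (hus : ∀ i ∈ u \ s, -M ≤ d i) (hMm : 0 < M + m)
    (hweight : M / (M + m) * ∑ i ∈ u, w i < ∑ i ∈ s, w i) :
    0 < ∑ i ∈ u, w i * d i := by
  have hthresh : M * ∑ i ∈ u, w i < (M + m) * ∑ i ∈ s, w i := by
    rwa [div_mul_eq_mul_div, div_lt_iff₀ hMm, mul_comm (∑ i ∈ s, w i)] at hweight
  have hin := mul_sum_le_sum_mul_of_le (fun i _ => hw i) hs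
  have hout := mul_sum_le_sum_mul_of_le (fun i _ => hw i) hus
  rw [← sum_sdiff hsu] at hthresh ⊢
  linarith

end

theorem weak_reasonable_part1_general {L : Type*} [Fintype L] [DecidableEq L]
    (p : L → ℝ) (hp : ∀ l, 0 ≤ p l)
    (Ln La : Finset L) (hsub : Ln ⊆ La)
    (Cn Cπ : L → ℝ)
    (hin : ∀ l ∈ Ln, Cn l < Cπ l)
    (hmid : ∀ l ∈ La \ Ln, Cπ l < Cn l)
    (hout : ∀ l ∉ La, Cn l = Cπ l)
    (Mbar m : ℝ)
    (hMbar : IsGreatest {x : ℝ | ∃ l ∈ La \ Ln, x = Cn l - Cπ l} Mbar)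
    (hm : IsLeast {x : ℝ | ∃ l ∈ Ln, x = Cπ l - Cn l} m)
    (hthresh : Mbar / (Mbar + m) * ∑ l ∈ La, p l < ∑ l ∈ Ln, p l) :
    ∑ l, p l * Cn l < ∑ l, p l * Cπ l := by
  have hMm : 0 < Mbar + m := by
    obtain ⟨l₀, hl₀, rfl⟩ := hMbar.1
    obtain ⟨l₁, hl₁, rfl⟩ := hm.1
    linarith [hmid l₀ hl₀, hin l₁ hl₁]
  have hpos := sum_mul_pos_of_weight_gt (d := fun l => Cπ l - Cn l) hsub hp
    (fun l hl => hm.2 ⟨l, hl, rfl⟩)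
    (fun l hl => neg_le.mpr <| by simpa using hMbar.2 ⟨l, hl, rfl⟩) hMm hthresh
  rw [← sum_mul_sub_sum_mul_eq_sum_of_eqOn_compl p Cn Cπ hout] at hpos
  linarith

/-- Part 1 of the proposition on metrics satisfying the weakened hierarchical
reasonableness conditions (Equations (2) and (4)): if the probability of the node `n`
exceeds `q_max(n) · P(a_n)`, then the expected cost of the parent strictly exceeds the
expected cost of the node. -/
theorem weak_reasonable_part1 {L : Type*} [Fintype L] [DecidableEq L]
    (p : L → ℝ) (hp : ∀ l, 0 ≤ p l) (hpsum : ∑ l, p l = 1)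
    (Ln La : Finset L) (hsub : Ln ⊆ La)
    (hLn : Ln.Nonempty) (hdiff : (La \ Ln).Nonempty)
    (Cn Cπ : L → ℝ)
    (hin : ∀ l ∈ Ln, Cn l < Cπ l)
    (hmid : ∀ l ∈ La \ Ln, Cπ l < Cn l)
    (hout : ∀ l ∉ La, Cn l = Cπ l)
    (Mbar m : ℝ)
    (hMbar : IsGreatest {x : ℝ | ∃ l ∈ La \ Ln, x = Cn l - Cπ l} Mbar)
    (hm : IsLeast {x : ℝ | ∃ l ∈ Ln, x = Cπ l - Cn l} m)
    (hthresh : Mbar / (Mbar + m) * ∑ l ∈ La, p l < ∑ l ∈ Ln, p l) :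
    ∑ l, p l * Cn l < ∑ l, p l * Cπ l :=
  weak_reasonable_part1_general p hp Ln La hsub Cn Cπ hin hmid hout Mbar m hMbar hm hthresh
end

section
/- Let N and L be finite sets, let Lf : N → Finset L assign to each node a set of leaves, let d : N → ℕ satisfy d(n) ≤ dmax for all n ∈ N, and suppose that whenever n ≠ m and d(n) = d(m), the sets Lf(n) and Lf(m) are disjoint. Let p : L → ℝ satisfy p(l) ≥ 0 for all l and Σ_{l∈L} p(l) ≤ 1. Then Σ_{n∈N} Σ_{l∈Lf(n)} p(l) ≤ dmax + 1. -/
/-!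
Group the nodes by depth. The nodes of one depth have disjoint leaf sets, so together they
carry mass at most `∑ l, p l ≤ 1`, and there are only `dmax + 1` depths.
-/

open Finset

section

variable {ι α M : Type*}

theorem Finset.sum_biUnion_le_sum_univ [Fintype α] [AddCommMonoid M] [PartialOrder M]
    [IsOrderedAddMonoid M] {s : Finset ι} {f : ι → Finset α}
    (hf : (s : Set ι).PairwiseDisjoint f) {g : α → M} (hg : ∀ a, 0 ≤ g a) :
    ∑ i ∈ s, ∑ a ∈ f i, g a ≤ ∑ a, g a := by
  classical
  rw [← sum_biUnion hf]
  exact sum_le_univ_sum_of_nonneg hg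

theorem Finset.sum_le_card_nsmul_of_sum_fiber_le [Fintype ι] [DecidableEq α] [AddCommMonoid M]
    [PartialOrder M] [IsOrderedAddMonoid M] (t : Finset α) (d : ι → α) (hd : ∀ i, d i ∈ t)
    (f : ι → M) (c : M) (hc : ∀ a ∈ t, ∑ i with d i = a, f i ≤ c) :
    ∑ i, f i ≤ #t • c := by
  rw [← sum_fiberwise_of_maps_to (fun i _ => hd i)]
  exact sum_le_card_nsmul t _ c hc

end

/-- Key counting inequality: the total node probability mass `∑_n P(n)` with
`P(n) = ∑_{l ∈ L(n)} p(l)` is at most `d_max + 1`, since nodes at the same depth have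
disjoint leaf-descendant sets. -/
theorem total_node_mass_le {N L : Type*} [Fintype N] [Fintype L]
    (Lf : N → Finset L) (d : N → ℕ) (dmax : ℕ) (hd : ∀ n, d n ≤ dmax)
    (hdisj : ∀ n m : N, n ≠ m → d n = d m → Disjoint (Lf n) (Lf m))
    (p : L → ℝ) (hp : ∀ l, 0 ≤ p l) (hpsum : ∑ l, p l ≤ 1) :
    ∑ n : N, ∑ l ∈ Lf n, p l ≤ (dmax : ℝ) + 1 := by
  have level_mass_le_one (k : ℕ) : ∑ n with d n = k, ∑ l ∈ Lf n, p l ≤ 1 := by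
    refine le_trans (sum_biUnion_le_sum_univ ?_ hp) hpsum
    intro n hn m hm hnm
    simp only [coe_filter, mem_univ, true_and, Set.mem_ofPred_eq] at hn hm
    exact hdisj n m hnm (hn.trans hm.symm)
  calc ∑ n : N, ∑ l ∈ Lf n, p l
      ≤ #(range (dmax + 1)) • (1 : ℝ) :=
        sum_le_card_nsmul_of_sum_fiber_le _ d (fun n => mem_range_succ_iff.2 (hd n)) _ 1
          fun k _ => level_mass_le_one k
    _ = (dmax : ℝ) + 1 := by simp
end

section
/- Let N and L be finite sets, let Lf : N → Finset L, let d : N → ℕ satisfy d(n) ≤ dmax for all n ∈ N, and suppose that whenever n ≠ m and d(n) = d(m), the sets Lf(n) and Lf(m) are disjoint. Let p : L → ℝ satisfy p(l) ≥ 0 for all l and Σ_{l∈L} p(l) ≤ 1. Let q > 0 and let S ⊆ N be such that Σ_{l∈Lf(n)} p(l) ≥ q for every n ∈ S. Then the cardinality of S satisfies |S| ≤ (dmax + 1)/q. -/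
/-! Nodes of `S` at one depth have disjoint leaf sets, so their probabilities add up to at
most `1`; summing over the `dmax + 1` depths bounds the total probability of `S` by
`dmax + 1`, while each node contributes at least `q`. -/

open Finset

section

variable {ι α M : Type*} [AddCommMonoid M] [PartialOrder M] [IsOrderedAddMonoid M]

theorem Finset.sum_sum_le_sum_univ_of_pairwiseDisjoint [Fintype α] {T : Finset ι}
    {f : ι → Finset α} (hf : (T : Set ι).PairwiseDisjoint f) {p : α → M} (hp : ∀ a, 0 ≤ p a) :
    ∑ i ∈ T, ∑ a ∈ f i, p a ≤ ∑ a, p a := by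
  classical
  rw [← sum_biUnion hf]
  exact sum_le_sum_of_subset_of_nonneg (subset_univ _) fun a _ _ => hp a

theorem Finset.sum_le_nsmul_of_sum_fiber_le {S : Finset ι} {d : ι → ℕ} {D : ℕ}
    (hd : ∀ i ∈ S, d i ≤ D) {g : ι → M} {c : M} (hg : ∀ k, ∑ i ∈ S with d i = k, g i ≤ c) :
    ∑ i ∈ S, g i ≤ (D + 1) • c := by
  have hmaps : ∀ i ∈ S, d i ∈ range (D + 1) := fun i hi => mem_range.2 (Nat.lt_succ_of_le (hd i hi))
  rw [← sum_fiberwise_of_maps_to hmaps]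
  simpa using sum_le_card_nsmul (range (D + 1)) _ c fun k _ => hg k

end

theorem candidate_set_card_le_general {N L : Type*} [Fintype L]
    (Lf : N → Finset L) (d : N → ℕ) (dmax : ℕ) (hd : ∀ n, d n ≤ dmax)
    (hdisj : ∀ n m : N, n ≠ m → d n = d m → Disjoint (Lf n) (Lf m))
    (p : L → ℝ) (hp : ∀ l, 0 ≤ p l) (hpsum : ∑ l, p l ≤ 1)
    (q : ℝ) (hq : 0 < q)
    (S : Finset N) (hS : ∀ n ∈ S, q ≤ ∑ l ∈ Lf n, p l) :
    (S.card : ℝ) ≤ ((dmax : ℝ) + 1) / q := by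
  have hlevel : ∀ k, ∑ n ∈ S with d n = k, ∑ l ∈ Lf n, p l ≤ 1 := by
    intro k
    refine le_trans (sum_sum_le_sum_univ_of_pairwiseDisjoint ?_ hp) hpsum
    intro n hn m hm hnm
    simp only [coe_filter, Set.mem_ofPred_eq] at hn hm
    exact hdisj n m hnm (hn.2.trans hm.2.symm)
  rw [le_div_iff₀ hq]
  calc (S.card : ℝ) * q ≤ ∑ n ∈ S, ∑ l ∈ Lf n, p l := by
        simpa using card_nsmul_le_sum S _ q hS
    _ ≤ (dmax + 1) • (1 : ℝ) := sum_le_nsmul_of_sum_fiber_le (fun n _ => hd n) hlevel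
    _ = dmax + 1 := by simp

/-- Candidate-set size bound of Theorem 1: if every node of `S` has probability at
least `q > 0`, then `|S| ≤ (d_max + 1)/q`. -/
theorem candidate_set_card_le {N L : Type*} [Fintype N] [Fintype L]
    (Lf : N → Finset L) (d : N → ℕ) (dmax : ℕ) (hd : ∀ n, d n ≤ dmax)
    (hdisj : ∀ n m : N, n ≠ m → d n = d m → Disjoint (Lf n) (Lf m))
    (p : L → ℝ) (hp : ∀ l, 0 ≤ p l) (hpsum : ∑ l, p l ≤ 1)
    (q : ℝ) (hq : 0 < q)
    (S : Finset N) (hS : ∀ n ∈ S, q ≤ ∑ l ∈ Lf n, p l) :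
    (S.card : ℝ) ≤ ((dmax : ℝ) + 1) / q :=
  candidate_set_card_le_general Lf d dmax hd hdisj p hp hpsum q hq S hS
end

section
/- Let V be a finite type carrying a rooted tree structure given by a root r ∈ V and a parent map π : V → V with π(r) = r and, for every v ∈ V, some k ∈ ℕ with π^[k](v) = r. Suppose every node with at least one child has at least two children. Call a subset S ⊆ V an antichain if for all u, v ∈ S with u ≠ v, u ∉ A(v) and v ∉ A(u). Then the number of nonempty antichains of V is at least 2^{|V|/2} − 1 (an inequality of real numbers, with real exponent |V|/2). -/
/-!
Each internal node has at least two children, children sets are disjoint and the root is nobody's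
child, so twice the number of internal nodes is less than `|V|`; hence at least `|V|/2` nodes are
leaves. No node lies strictly below a leaf, so every nonempty set of leaves is an antichain, which
gives `2^(#leaves) - 1 ≥ 2^(|V|/2) - 1` of them.
-/

open Finset

namespace ParentMap

variable {V : Type*} [Fintype V] [DecidableEq V] (π : V → V)

def children (v : V) : Finset V := univ.filter fun u => π u = v ∧ u ≠ v

def leaves : Finset V := univ.filter fun v => children π v = ∅

def nonemptyAntichains : Set (Finset V) :=
  {S | S.Nonempty ∧ ∀ u ∈ S, ∀ v ∈ S, u ≠ v →
    (∀ k : ℕ, π^[k] v ≠ u) ∧ (∀ k : ℕ, π^[k] u ≠ v)}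

variable {π}

lemma mem_children {u v : V} : u ∈ children π v ↔ π u = v ∧ u ≠ v := by
  simp [children]

lemma mem_leaves {v : V} : v ∈ leaves π ↔ children π v = ∅ := by
  simp [leaves]

lemma eq_of_iterate_eq_mem_leaves {u v : V} (hu : u ∈ leaves π) {k : ℕ} (h : π^[k] v = u) :
    v = u := by
  induction k generalizing v with
  | zero => exact h
  | succ k ih =>
    have hπv : π v = u := ih h
    by_contra hvu
    have : v ∈ children π u := mem_children.2 ⟨hπv, hvu⟩
    simp [mem_leaves.1 hu] at this

lemma pairwiseDisjoint_children (s : Set V) : s.PairwiseDisjoint (children π) := by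
  intro v _ w _ hvw
  refine Finset.disjoint_left.2 fun u hv hw => hvw ?_
  exact (mem_children.1 hv).1.symm.trans (mem_children.1 hw).1

lemma notMem_children_of_map_eq_self {r : V} (hr : π r = r) (v : V) : r ∉ children π v :=
  fun h => (mem_children.1 h).2 (hr.symm.trans (mem_children.1 h).1)

lemma two_mul_card_compl_leaves_lt {r : V} (hr : π r = r)
    (hbranch : ∀ v, (children π v).Nonempty → 2 ≤ #(children π v)) :
    2 * #(leaves π)ᶜ < Fintype.card V := by
  have hsum : #(leaves π)ᶜ * 2 ≤ #((leaves π)ᶜ.biUnion (children π)) := by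
    rw [card_biUnion (pairwiseDisjoint_children _)]
    refine card_nsmul_le_sum _ _ _ fun v hv => hbranch v ?_
    simpa [mem_leaves, nonempty_iff_ne_empty] using hv
  have hr_notMem : r ∉ (leaves π)ᶜ.biUnion (children π) := by
    simpa only [mem_biUnion, not_exists, not_and] using
      fun v _ => notMem_children_of_map_eq_self hr v
  have := card_lt_univ_of_notMem hr_notMem
  omega

lemma card_le_two_mul_card_leaves {r : V} (hr : π r = r)
    (hbranch : ∀ v, (children π v).Nonempty → 2 ≤ #(children π v)) :
    Fintype.card V ≤ 2 * #(leaves π) := by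
  have := two_mul_card_compl_leaves_lt hr hbranch
  rw [card_compl] at this
  have := card_le_univ (leaves π)
  omega

lemma erase_empty_powerset_leaves_subset :
    ↑((leaves π).powerset.erase ∅) ⊆ nonemptyAntichains π := by
  intro S hS
  simp only [coe_erase, Set.mem_sdiff, mem_coe, mem_powerset, Set.mem_singleton_iff] at hS
  obtain ⟨hSl, hSne⟩ := hS
  refine ⟨nonempty_iff_ne_empty.2 hSne,
    fun u hu v hv huv => ⟨fun k h => huv ?_, fun k h => huv ?_⟩⟩
  · exact (eq_of_iterate_eq_mem_leaves (hSl hu) h).symm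
  · exact eq_of_iterate_eq_mem_leaves (hSl hv) h

lemma two_pow_card_leaves_sub_one_le :
    2 ^ #(leaves π) - 1 ≤ (nonemptyAntichains π).ncard := by
  have := Set.ncard_le_ncard (erase_empty_powerset_leaves_subset (π := π)) (Set.toFinite _)
  rwa [Set.ncard_coe_finset, card_erase_of_mem (empty_mem_powerset _), card_powerset] at this

end ParentMap

open ParentMap in
theorem card_antichains_ge_general {V : Type*} [Fintype V] [DecidableEq V]
    (r : V) (π : V → V) (hr : π r = r)
    (hbranch : ∀ v : V,
      (Finset.univ.filter (fun u => π u = v ∧ u ≠ v)).Nonempty →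
      2 ≤ (Finset.univ.filter (fun u => π u = v ∧ u ≠ v)).card) :
    (2 : ℝ) ^ ((Fintype.card V : ℝ) / 2) - 1 ≤
      ({S : Finset V | S.Nonempty ∧ ∀ u ∈ S, ∀ v ∈ S, u ≠ v →
          (∀ k : ℕ, π^[k] v ≠ u) ∧ (∀ k : ℕ, π^[k] u ≠ v)} : Set (Finset V)).ncard := by
  have hleaves : (Fintype.card V : ℝ) / 2 ≤ #(leaves π) := by
    have := card_le_two_mul_card_leaves hr hbranch
    rw [div_le_iff₀ two_pos]
    exact_mod_cast (by omega : Fintype.card V ≤ #(leaves π) * 2)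
  have hcount : ((2 ^ #(leaves π) - 1 : ℕ) : ℝ) ≤ (nonemptyAntichains π).ncard :=
    Nat.cast_le.2 two_pow_card_leaves_sub_one_le
  calc (2 : ℝ) ^ ((Fintype.card V : ℝ) / 2) - 1
      ≤ 2 ^ (#(leaves π) : ℝ) - 1 := by gcongr; norm_num
    _ = ((2 ^ #(leaves π) - 1 : ℕ) : ℝ) := by
      rw [Real.rpow_natCast, Nat.cast_sub Nat.one_le_two_pow]; norm_num
    _ ≤ _ := hcount

/-- In a rooted tree where every internal node has at least two children, the number of
nonempty antichains (sets of mutually exclusive nodes) is at least `2^(|V|/2) − 1`. -/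
theorem card_antichains_ge {V : Type*} [Fintype V] [DecidableEq V]
    (r : V) (π : V → V) (hr : π r = r) (hroot : ∀ v : V, ∃ k : ℕ, π^[k] v = r)
    (hbranch : ∀ v : V,
      (Finset.univ.filter (fun u => π u = v ∧ u ≠ v)).Nonempty →
      2 ≤ (Finset.univ.filter (fun u => π u = v ∧ u ≠ v)).card) :
    (2 : ℝ) ^ ((Fintype.card V : ℝ) / 2) - 1 ≤
      ({S : Finset V | S.Nonempty ∧ ∀ u ∈ S, ∀ v ∈ S, u ≠ v →
          (∀ k : ℕ, π^[k] v ≠ u) ∧ (∀ k : ℕ, π^[k] u ≠ v)} : Set (Finset V)).ncard :=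
  card_antichains_ge_general r π hr hbranch
end

section
/- Let N be a finite type, L a finite nonempty set, A : L → Finset N with a fixed element r ∈ N satisfying r ∈ A(l) for every l ∈ L, d : L → ℕ with d(l) ≤ dmax for all l ∈ L, β > 0, and p : L → ℝ with p(l) ≥ 0 for all l and Σ_{l∈L} p(l) = 1. Define U(h) = Σ_{l∈L} p(l)·(1+β²)·|h ∩ A(l)| / (|h| + β²·(d(l)+1)) for finite h ⊆ N. Then U({r}) ≥ (1+β²)/(1 + β²·(dmax+1)) > 0 = U(∅). In particular any maximizer of U over finite subsets of N is nonempty and has utility at least (1+β²)/(1+β²(dmax+1)). -/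
/-- Expected `hF_β` utility of a prediction `h` (a finite set of nodes equal to its own
ancestor-augmentation) under the leaf distribution `p`. -/
noncomputable def expUtility {N L : Type*} [Fintype L] [DecidableEq N]
    (A : L → Finset N) (d : L → ℕ) (β : ℝ) (p : L → ℝ) (h : Finset N) : ℝ :=
  ∑ l, p l * ((1 + β ^ 2) * ((h ∩ A l).card : ℝ) /
    ((h.card : ℝ) + β ^ 2 * ((d l : ℝ) + 1)))

/-! The root lies in every ancestor set, so `U({r})` is the `p`-average of
`(1+β²)/(1+β²(d(l)+1))`, which decreases in `d(l)` and is therefore at least its value at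
`dmax`. Since `U(∅) = 0` is below this positive bound, no maximizer is empty. -/

open Finset

section

variable {N L : Type*} [Fintype L] [DecidableEq N]
  (A : L → Finset N) (d : L → ℕ) (β : ℝ) (p : L → ℝ)

theorem expUtility_empty : expUtility A d β p ∅ = 0 := by
  simp [expUtility]

theorem expUtility_singleton {r : N} (hr : ∀ l, r ∈ A l) :
    expUtility A d β p {r} = ∑ l, p l * ((1 + β ^ 2) / (1 + β ^ 2 * ((d l : ℝ) + 1))) := by
  refine sum_congr rfl fun l _ => ?_
  rw [singleton_inter_of_mem (hr l), card_singleton, Nat.cast_one, mul_one]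

end

theorem one_add_sq_div_one_add_sq_mul_pos (β : ℝ) (n : ℕ) :
    0 < (1 + β ^ 2) / (1 + β ^ 2 * ((n : ℝ) + 1)) := by
  positivity

theorem antitone_one_add_sq_div_one_add_sq_mul (β : ℝ) :
    Antitone fun n : ℕ => (1 + β ^ 2) / (1 + β ^ 2 * ((n : ℝ) + 1)) := fun m n hmn => by
  have : (m : ℝ) ≤ n := by exact_mod_cast hmn
  dsimp only
  gcongr

theorem le_sum_mul_of_le {ι R : Type*} [Semiring R] [PartialOrder R] [IsOrderedRing R]
    (s : Finset ι) {p f : ι → R} {c : R}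
    (hp : ∀ i ∈ s, 0 ≤ p i) (hpsum : ∑ i ∈ s, p i = 1) (hf : ∀ i ∈ s, c ≤ f i) :
    c ≤ ∑ i ∈ s, p i * f i :=
  calc c = ∑ i ∈ s, p i * c := by rw [← sum_mul, hpsum, one_mul]
    _ ≤ ∑ i ∈ s, p i * f i := sum_le_sum fun i hi => mul_le_mul_of_nonneg_left (hf i hi) (hp i hi)

theorem root_utility_lower_bound_general {N L : Type*} [DecidableEq N]
    [Fintype L]
    (A : L → Finset N) (r : N) (hr : ∀ l, r ∈ A l)
    (d : L → ℕ) (dmax : ℕ) (hd : ∀ l, d l ≤ dmax)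
    (β : ℝ)
    (p : L → ℝ) (hp : ∀ l, 0 ≤ p l) (hpsum : ∑ l, p l = 1) :
    (1 + β ^ 2) / (1 + β ^ 2 * ((dmax : ℝ) + 1)) ≤ expUtility A d β p {r} ∧
    0 < (1 + β ^ 2) / (1 + β ^ 2 * ((dmax : ℝ) + 1)) ∧
    expUtility A d β p ∅ = 0 ∧
    ∀ h : Finset N, (∀ h' : Finset N, expUtility A d β p h' ≤ expUtility A d β p h) →
      h.Nonempty ∧
      (1 + β ^ 2) / (1 + β ^ 2 * ((dmax : ℝ) + 1)) ≤ expUtility A d β p h := by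
  have hroot : (1 + β ^ 2) / (1 + β ^ 2 * ((dmax : ℝ) + 1)) ≤ expUtility A d β p {r} := by
    rw [expUtility_singleton A d β p hr]
    exact le_sum_mul_of_le univ (fun l _ => hp l) hpsum
      fun l _ => antitone_one_add_sq_div_one_add_sq_mul β (hd l)
  have hpos := one_add_sq_div_one_add_sq_mul_pos β dmax
  have hempty := expUtility_empty A d β p
  refine ⟨hroot, hpos, hempty, fun h hmax => ⟨?_, hroot.trans (hmax {r})⟩⟩
  rw [nonempty_iff_ne_empty]
  rintro rfl
  linarith [hmax {r}]

/-- The expected `hF_β` utility of predicting the root alone is at least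
`(1+β²)/(1+β²(d_max+1)) > 0 = U(∅)`; in particular any maximizer of the expected
utility is nonempty, with utility at least this bound. -/
theorem root_utility_lower_bound {N L : Type*} [Fintype N] [DecidableEq N]
    [Fintype L] [Nonempty L]
    (A : L → Finset N) (r : N) (hr : ∀ l, r ∈ A l)
    (d : L → ℕ) (dmax : ℕ) (hd : ∀ l, d l ≤ dmax)
    (β : ℝ) (hβ : 0 < β)
    (p : L → ℝ) (hp : ∀ l, 0 ≤ p l) (hpsum : ∑ l, p l = 1) :
    (1 + β ^ 2) / (1 + β ^ 2 * ((dmax : ℝ) + 1)) ≤ expUtility A d β p {r} ∧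
    0 < (1 + β ^ 2) / (1 + β ^ 2 * ((dmax : ℝ) + 1)) ∧
    expUtility A d β p ∅ = 0 ∧
    ∀ h : Finset N, (∀ h' : Finset N, expUtility A d β p h' ≤ expUtility A d β p h) →
      h.Nonempty ∧
      (1 + β ^ 2) / (1 + β ^ 2 * ((dmax : ℝ) + 1)) ≤ expUtility A d β p h :=
  root_utility_lower_bound_general A r hr d dmax hd β p hp hpsum
end

section
/- Let N be a finite type, L a finite set, A : L → Finset N, d : L → ℕ with dmin ≤ d(l) ≤ D for all l ∈ L, β > 0, and p : L → ℝ with p(l) ≥ 0 for all l. Define U(h) = Σ_{l∈L} p(l)·(1+β²)·|h ∩ A(l)| / (|h| + β²·(d(l)+1)) for finite h ⊆ N, and for n ∈ N set P(n) = Σ_{l∈L, n∈A(l)} p(l). Then for any finite h ⊆ N and any n ∈ N with n ∉ h: U(h ∪ {n}) − U(h) ≤ (1+β²)·P(n)/(|h| + 1 + β²·(dmin+1)) − U(h)/(|h| + 1 + β²·(D+1)). -/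
/-! Adding a node `n ∉ h` raises `|h|` by one and `|h ∩ A(l)|` by `[n ∈ A(l)]`, so the `hF_β`
score `a·s/(c+b)` of each leaf (`a = 1+β²`, `s = |h ∩ A(l)|`, `c = |h|`, `b = β²(d(l)+1)`)
changes by exactly `(a·[n ∈ A(l)] − a·s/(c+b)) / (c+1+b)`. Bounding the common denominator
`c+1+b` from below by `b ≥ β²(dmin+1)` in the gain and from above by `b ≤ β²(D+1)` in the loss,
then averaging over the leaves with the weights `p`, gives the inequality. -/

lemma card_insert_inter_of_notMem {N : Type*} [DecidableEq N] {h : Finset N} {n : N}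
    (hn : n ∉ h) (B : Finset N) :
    ((insert n h ∩ B).card : ℝ) = (h ∩ B).card + if n ∈ B then 1 else 0 := by
  by_cases hnB : n ∈ B
  · rw [Finset.insert_inter_of_mem hnB,
      Finset.card_insert_of_notMem fun hmem => hn (Finset.mem_inter.1 hmem).1]
    simp [hnB]
  · simp [Finset.insert_inter_of_notMem hnB, hnB]

lemma div_add_one_sub_div_eq {a b c s i : ℝ} (hcb : 0 < c + b) :
    a * (s + i) / (c + 1 + b) - a * s / (c + b) = (a * i - a * s / (c + b)) / (c + 1 + b) := by
  have : c + 1 + b ≠ 0 := by linarith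
  field_simp
  ring

lemma div_add_one_sub_div_le {a b bmin bmax c s i : ℝ} (ha : 0 ≤ a) (hbmin : 0 < bmin)
    (hb : bmin ≤ b) (hb' : b ≤ bmax) (hc : 0 ≤ c) (hs : 0 ≤ s) (hi : 0 ≤ i) :
    a * (s + i) / (c + 1 + b) - a * s / (c + b) ≤
      a * i / (c + 1 + bmin) - a * s / (c + b) / (c + 1 + bmax) := by
  have hcb : 0 < c + b := by linarith
  rw [div_add_one_sub_div_eq hcb, sub_div]
  have hgain : a * i / (c + 1 + b) ≤ a * i / (c + 1 + bmin) := by gcongr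
  have hloss : a * s / (c + b) / (c + 1 + bmax) ≤ a * s / (c + b) / (c + 1 + b) := by
    gcongr
    linarith
  linarith

theorem utility_difference_bound_general {N L : Type*} [DecidableEq N] [Fintype L]
    (A : L → Finset N) (d : L → ℕ) (dmin D : ℕ)
    (hd : ∀ l, dmin ≤ d l ∧ d l ≤ D)
    (β : ℝ) (hβ : 0 < β)
    (p : L → ℝ) (hp : ∀ l, 0 ≤ p l)
    (h : Finset N) (n : N) (hn : n ∉ h) :
    expUtility A d β p (insert n h) - expUtility A d β p h ≤
      (1 + β ^ 2) * (∑ l ∈ Finset.univ.filter (fun l => n ∈ A l), p l) /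
          ((h.card : ℝ) + 1 + β ^ 2 * ((dmin : ℝ) + 1)) -
        expUtility A d β p h / ((h.card : ℝ) + 1 + β ^ 2 * ((D : ℝ) + 1)) := by
  set c : ℝ := (h.card : ℝ)
  set b : L → ℝ := fun l => β ^ 2 * ((d l : ℝ) + 1)
  set ind : L → ℝ := fun l => if n ∈ A l then 1 else 0
  have hleaf (l : L) :
      (1 + β ^ 2) * ((h ∩ A l).card + ind l) / (c + 1 + b l) -
          (1 + β ^ 2) * (h ∩ A l).card / (c + b l) ≤
        (1 + β ^ 2) * ind l / (c + 1 + β ^ 2 * ((dmin : ℝ) + 1)) -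
          (1 + β ^ 2) * (h ∩ A l).card / (c + b l) / (c + 1 + β ^ 2 * ((D : ℝ) + 1)) := by
    have hdl : (dmin : ℝ) ≤ d l ∧ (d l : ℝ) ≤ D := by exact_mod_cast hd l
    refine div_add_one_sub_div_le (by positivity) (by positivity) ?_ ?_ (by positivity)
      (by positivity) (by positivity)
    · exact mul_le_mul_of_nonneg_left (by linarith) (sq_nonneg β)
    · exact mul_le_mul_of_nonneg_left (by linarith) (sq_nonneg β)
  have hcard : ((insert n h).card : ℝ) = c + 1 := by
    rw [Finset.card_insert_of_notMem hn, Nat.cast_succ]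
  simp only [expUtility, hcard, card_insert_inter_of_notMem hn, Finset.sum_filter, Finset.mul_sum,
    Finset.sum_div, ← Finset.sum_sub_distrib]
  refine Finset.sum_le_sum fun l _ => ?_
  convert mul_le_mul_of_nonneg_left (hleaf l) (hp l) using 1
  · ring
  · simp only [ind]; split_ifs <;> ring

/-- Key utility-difference inequality in the proof of Lemma 2 on `hF_β` scores:
adding a node `n ∉ h` changes the expected utility by at most
`(1+β²)·P(n)/(|h|+1+β²(d_min+1)) − U(h)/(|h|+1+β²(D+1))`. -/
theorem utility_difference_bound {N L : Type*} [Fintype N] [DecidableEq N] [Fintype L]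
    (A : L → Finset N) (d : L → ℕ) (dmin D : ℕ)
    (hd : ∀ l, dmin ≤ d l ∧ d l ≤ D)
    (β : ℝ) (hβ : 0 < β)
    (p : L → ℝ) (hp : ∀ l, 0 ≤ p l)
    (h : Finset N) (n : N) (hn : n ∉ h) :
    expUtility A d β p (insert n h) - expUtility A d β p h ≤
      (1 + β ^ 2) * (∑ l ∈ Finset.univ.filter (fun l => n ∈ A l), p l) /
          ((h.card : ℝ) + 1 + β ^ 2 * ((dmin : ℝ) + 1)) -
        expUtility A d β p h / ((h.card : ℝ) + 1 + β ^ 2 * ((D : ℝ) + 1)) :=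
  utility_difference_bound_general A d dmin D hd β hβ p hp h n hn
end

section
/- Let N be a finite type, L a finite set, A : L → Finset N, d : L → ℕ with dmin ≤ d(l) ≤ D for all l ∈ L, β > 0, and p : L → ℝ with p(l) ≥ 0 for all l. Define U(h) = Σ_{l∈L} p(l)·(1+β²)·|h ∩ A(l)| / (|h| + β²·(d(l)+1)) for finite h ⊆ N, and for n ∈ N set P(n) = Σ_{l∈L, n∈A(l)} p(l). Let h ⊆ N be finite and n ∈ N with n ∉ h. If P(n) < 1/(1 + β²·(D+1)) and U(h) ≥ (1+β²)/(1 + β²·(dmin+1)), then U(h ∪ {n}) < U(h): adding the low-probability node n strictly decreases the expected hF_β utility. -/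
/-!
Adding `n` to `h` (with `s = |h|`, `w l = β²(d l + 1)`) changes the utility by a gain
`∑_{n ∈ A l} p l (1+β²)/(s+1+w l)`, at most `(1+β²) P(n)/(s+1+w_min)`, minus a loss
`∑ p l u_l(h)/(s+1+w l)`, at least `U(h)/(s+1+w_max)`, where `u_l(h)` is the `hF_β` score of `h`
at leaf `l`. The thresholds on `P(n)` and `U(h)` make the gain smaller than the loss, because
`(s+a)b ≥ a(s+b)` whenever `a ≤ b` and `s ≥ 0`.
-/

open Finset

section InsertNode

variable {N L : Type*} [DecidableEq N] [Fintype L]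
  (A : L → Finset N) (d : L → ℕ) (β : ℝ) (p : L → ℝ) (h : Finset N)

noncomputable def insertGain (n : N) : ℝ :=
  ∑ l ∈ univ.filter (fun l => n ∈ A l),
    p l * ((1 + β ^ 2) / ((h.card : ℝ) + 1 + β ^ 2 * ((d l : ℝ) + 1)))

noncomputable def insertLoss : ℝ :=
  ∑ l, p l * ((1 + β ^ 2) * ((h ∩ A l).card : ℝ) / ((h.card : ℝ) + β ^ 2 * ((d l : ℝ) + 1))) /
    ((h.card : ℝ) + 1 + β ^ 2 * ((d l : ℝ) + 1))

theorem expUtility_insert (hβ : β ≠ 0) {n : N} (hn : n ∉ h) :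
    expUtility A d β p (insert n h) =
      expUtility A d β p h + insertGain A d β p h n - insertLoss A d β p h := by
  rw [insertGain, sum_filter, expUtility, expUtility, insertLoss, ← sum_add_distrib,
    ← sum_sub_distrib]
  refine sum_congr rfl fun l _ => ?_
  have hden : (h.card : ℝ) + β ^ 2 * ((d l : ℝ) + 1) ≠ 0 := by positivity
  have hden' : (h.card : ℝ) + 1 + β ^ 2 * ((d l : ℝ) + 1) ≠ 0 := by positivity
  rw [card_insert_of_notMem hn]
  by_cases hnl : n ∈ A l
  · rw [insert_inter_of_mem hnl, card_insert_of_notMem (fun hm => hn (mem_inter.1 hm).1),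
      if_pos hnl]
    push_cast
    field_simp
    ring
  · rw [insert_inter_of_notMem hnl, if_neg hnl]
    push_cast
    field_simp
    ring

theorem insertGain_le {dmin : ℕ} (hdmin : ∀ l, dmin ≤ d l) (hp : ∀ l, 0 ≤ p l) (n : N) :
    insertGain A d β p h n ≤ (1 + β ^ 2) / ((h.card : ℝ) + 1 + β ^ 2 * ((dmin : ℝ) + 1)) *
      ∑ l ∈ univ.filter (fun l => n ∈ A l), p l := by
  rw [insertGain, mul_sum]
  refine sum_le_sum fun l _ => ?_
  rw [mul_comm]
  have hd : (dmin : ℝ) ≤ d l := by exact_mod_cast hdmin l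
  gcongr
  exact hp l

theorem le_insertLoss {D : ℕ} (hD : ∀ l, d l ≤ D) (hp : ∀ l, 0 ≤ p l) :
    expUtility A d β p h / ((h.card : ℝ) + 1 + β ^ 2 * ((D : ℝ) + 1)) ≤
      insertLoss A d β p h := by
  rw [expUtility, sum_div, insertLoss]
  refine sum_le_sum fun l _ => ?_
  have hd : (d l : ℝ) ≤ D := by exact_mod_cast hD l
  have hu : 0 ≤ p l * ((1 + β ^ 2) * ((h ∩ A l).card : ℝ) /
      ((h.card : ℝ) + β ^ 2 * ((d l : ℝ) + 1))) := mul_nonneg (hp l) (by positivity)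
  gcongr

end InsertNode

theorem expUtility_of_isEmpty {N L : Type*} [DecidableEq N] [Fintype L] [IsEmpty L]
    (A : L → Finset N) (d : L → ℕ) (β : ℝ) (p : L → ℝ) (h : Finset N) :
    expUtility A d β p h = 0 := by
  simp [expUtility]

theorem div_mul_lt_div_of_lt_inv {s a b c P U : ℝ} (hs : 0 ≤ s) (ha : 0 < a) (hab : a ≤ b)
    (hc : 0 < c) (hP : P < 1 / b) (hU : c / a ≤ U) :
    c / (s + a) * P < U / (s + b) := by
  have hb : 0 < b := ha.trans_le hab
  calc c / (s + a) * P < c / (s + a) * (1 / b) := by gcongr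
    _ = c / ((s + a) * b) := by field_simp
    _ ≤ c / (a * (s + b)) := by
      apply div_le_div_of_nonneg_left hc.le (by positivity)
      nlinarith
    _ = c / a / (s + b) := by rw [div_div]
    _ ≤ U / (s + b) := by gcongr

theorem add_low_prob_node_decreases_utility_general {N L : Type*}
    [DecidableEq N] [Fintype L]
    (A : L → Finset N) (d : L → ℕ) (dmin D : ℕ)
    (hd : ∀ l, dmin ≤ d l ∧ d l ≤ D)
    (β : ℝ) (hβ : 0 < β)
    (p : L → ℝ) (hp : ∀ l, 0 ≤ p l)
    (h : Finset N) (n : N) (hn : n ∉ h)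
    (hPn : ∑ l ∈ Finset.univ.filter (fun l => n ∈ A l), p l <
      1 / (1 + β ^ 2 * ((D : ℝ) + 1)))
    (hU : (1 + β ^ 2) / (1 + β ^ 2 * ((dmin : ℝ) + 1)) ≤ expUtility A d β p h) :
    expUtility A d β p (insert n h) < expUtility A d β p h := by
  obtain ⟨l₀⟩ : Nonempty L := by
    by_contra hL
    rw [not_nonempty_iff] at hL
    rw [expUtility_of_isEmpty] at hU
    exact hU.not_gt (by positivity)
  have hdD : (dmin : ℝ) ≤ D := by exact_mod_cast (hd l₀).1.trans (hd l₀).2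
  have hgain := insertGain_le A d β p h (fun l => (hd l).1) hp n
  have hloss := le_insertLoss A d β p h (fun l => (hd l).2) hp
  have hgap := div_mul_lt_div_of_lt_inv (s := (h.card : ℝ)) (Nat.cast_nonneg _)
    (by positivity) (by gcongr) (by positivity) hPn hU
  rw [expUtility_insert A d β p h hβ.ne' hn]
  simp only [← add_assoc] at hgain hloss hgap
  linarith

/-- Core of Lemma 2 on `hF_β` scores: adding a node of probability below the threshold
`1/(1+β²(D+1))` to a prediction whose utility is at least `(1+β²)/(1+β²(d_min+1))`
strictly decreases the expected `hF_β` utility. -/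
theorem add_low_prob_node_decreases_utility {N L : Type*}
    [Fintype N] [DecidableEq N] [Fintype L]
    (A : L → Finset N) (d : L → ℕ) (dmin D : ℕ)
    (hd : ∀ l, dmin ≤ d l ∧ d l ≤ D)
    (β : ℝ) (hβ : 0 < β)
    (p : L → ℝ) (hp : ∀ l, 0 ≤ p l)
    (h : Finset N) (n : N) (hn : n ∉ h)
    (hPn : ∑ l ∈ Finset.univ.filter (fun l => n ∈ A l), p l <
      1 / (1 + β ^ 2 * ((D : ℝ) + 1)))
    (hU : (1 + β ^ 2) / (1 + β ^ 2 * ((dmin : ℝ) + 1)) ≤ expUtility A d β p h) :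
    expUtility A d β p (insert n h) < expUtility A d β p h :=
  add_low_prob_node_decreases_utility_general A d dmin D hd β hβ p hp h n hn hPn hU
end

section
/- Let N and L be finite sets, let Lf : N → Finset L, let d : N → ℕ satisfy d(n) ≤ dmax for all n ∈ N, and suppose that whenever n ≠ m and d(n) = d(m), the sets Lf(n) and Lf(m) are disjoint. Let p : L → ℝ satisfy p(l) ≥ 0 for all l and Σ_{l∈L} p(l) = 1, and let β > 0. If S ⊆ N is such that Σ_{l∈Lf(n)} p(l) ≥ 1/(1 + β²·(dmax+1)) for every n ∈ S, then |S| ≤ (1 + β²·(dmax+1))·(dmax + 1). -/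
/-! Nodes of equal depth have disjoint leaf sets, so the probabilities of the nodes of `S` at a
fixed depth add up to at most `1`; as each is at least `1 / c` with `c = 1 + β² (d_max + 1)`,
every depth contributes at most `c` nodes, and there are `d_max + 1` depths. -/

open Finset

theorem card_mul_le_sum_of_pairwiseDisjoint {N L : Type*} [Fintype L] {Lf : N → Finset L}
    {p : L → ℝ} (hp : ∀ l, 0 ≤ p l) {T : Finset N} (hT : (T : Set N).PairwiseDisjoint Lf)
    {ε : ℝ} (hε : ∀ n ∈ T, ε ≤ ∑ l ∈ Lf n, p l) :
    T.card * ε ≤ ∑ l, p l := by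
  classical
  calc T.card * ε ≤ ∑ n ∈ T, ∑ l ∈ Lf n, p l := by
        simpa using card_nsmul_le_sum T _ ε hε
    _ = ∑ l ∈ T.biUnion Lf, p l := (sum_biUnion hT).symm
    _ ≤ ∑ l, p l := sum_le_sum_of_subset_of_nonneg (subset_univ _) fun l _ _ => hp l

theorem pairwiseDisjoint_filter_eq {N L : Type*} {Lf : N → Finset L} {d : N → ℕ}
    (hdisj : ∀ n m : N, n ≠ m → d n = d m → Disjoint (Lf n) (Lf m)) (S : Finset N) (k : ℕ) :
    (S.filter (d · = k) : Set N).PairwiseDisjoint Lf := by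
  intro a ha b hb hab
  exact hdisj a b hab ((mem_filter.1 ha).2.trans (mem_filter.1 hb).2.symm)

theorem hFbeta_candidate_set_card_le_general {N L : Type*} [Fintype L]
    (Lf : N → Finset L) (d : N → ℕ) (dmax : ℕ) (hd : ∀ n, d n ≤ dmax)
    (hdisj : ∀ n m : N, n ≠ m → d n = d m → Disjoint (Lf n) (Lf m))
    (p : L → ℝ) (hp : ∀ l, 0 ≤ p l) (hpsum : ∑ l, p l = 1)
    (β : ℝ)
    (S : Finset N)
    (hS : ∀ n ∈ S, 1 / (1 + β ^ 2 * ((dmax : ℝ) + 1)) ≤ ∑ l ∈ Lf n, p l) :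
    (S.card : ℝ) ≤ (1 + β ^ 2 * ((dmax : ℝ) + 1)) * ((dmax : ℝ) + 1) := by
  set c : ℝ := 1 + β ^ 2 * ((dmax : ℝ) + 1)
  have hc : 0 < c := by positivity
  have hlevel (k : ℕ) : ((S.filter (d · = k)).card : ℝ) ≤ c := by
    have h := card_mul_le_sum_of_pairwiseDisjoint hp (pairwiseDisjoint_filter_eq hdisj S k)
      fun n hn => hS n (mem_filter.1 hn).1
    rwa [hpsum, ← div_eq_mul_one_div, div_le_one hc] at h
  calc (S.card : ℝ) = ∑ k ∈ range (dmax + 1), ((S.filter (d · = k)).card : ℝ) := by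
        exact_mod_cast card_eq_sum_card_fiberwise fun n _ => mem_range.2 (Nat.lt_succ_of_le (hd n))
    _ ≤ ∑ _k ∈ range (dmax + 1), c := sum_le_sum fun k _ => hlevel k
    _ = c * ((dmax : ℝ) + 1) := by simp [mul_comm]

/-- Cardinality bound on the candidate set `Q(p)` underlying Theorem 2 on `hF_β`
decoding: if every node of `S` has probability at least `1/(1+β²(d_max+1))`, then
`|S| ≤ (1+β²(d_max+1))·(d_max+1)`. -/
theorem hFbeta_candidate_set_card_le {N L : Type*} [Fintype N] [Fintype L]
    (Lf : N → Finset L) (d : N → ℕ) (dmax : ℕ) (hd : ∀ n, d n ≤ dmax)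
    (hdisj : ∀ n m : N, n ≠ m → d n = d m → Disjoint (Lf n) (Lf m))
    (p : L → ℝ) (hp : ∀ l, 0 ≤ p l) (hpsum : ∑ l, p l = 1)
    (β : ℝ) (hβ : 0 < β)
    (S : Finset N)
    (hS : ∀ n ∈ S, 1 / (1 + β ^ 2 * ((dmax : ℝ) + 1)) ≤ ∑ l ∈ Lf n, p l) :
    (S.card : ℝ) ≤ (1 + β ^ 2 * ((dmax : ℝ) + 1)) * ((dmax : ℝ) + 1) :=
  hFbeta_candidate_set_card_le_general Lf d dmax hd hdisj p hp hpsum β S hS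
end

section
/- Let (N, ≤) be a finite partially ordered set and for S ⊆ N let aug(S) = {m ∈ N : ∃ n ∈ S, n ≤ m}. Let L be a finite set, A : L → Finset N, d : L → ℕ, β > 0, and p : L → ℝ with p(l) ≥ 0 for all l. Define f(S) = Σ_{l∈L} p(l)·(1+β²)·|aug(S) ∩ A(l)| / (|aug(S)| + β²·(d(l)+1)) for S ⊆ N (with f(∅) = 0). Then the maximum of f over all subsets S ⊆ N equals the maximum of f over all antichains of N (subsets whose distinct elements are pairwise incomparable). -/
/-- Expected `hF_β` utility of a prediction `S ⊆ N`, which depends on `S` only through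
its ancestor-augmentation (upward closure) `aug S = {m | ∃ n ∈ S, n ≤ m}`. -/
noncomputable def augUtility {N L : Type*} [Fintype N] [PartialOrder N] [DecidableEq N]
    [DecidableRel ((· ≤ ·) : N → N → Prop)] [Fintype L]
    (A : L → Finset N) (d : L → ℕ) (β : ℝ) (p : L → ℝ) (S : Finset N) : ℝ :=
  letI aug : Finset N := Finset.univ.filter (fun m => ∃ n ∈ S, n ≤ m)
  ∑ l, p l * ((1 + β ^ 2) * ((aug ∩ A l).card : ℝ) /
    ((aug.card : ℝ) + β ^ 2 * ((d l : ℝ) + 1)))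

/-!
Every set has the same upward closure as its set of minimal elements (in a finite order every
element lies above a minimal one), and the minimal elements form an antichain. Since the
utility only sees the upward closure, each value on a subset is already attained on an antichain.
-/

lemma upperClosure_setOf_minimal {α : Type*} [Preorder α] [WellFoundedLT α] (s : Set α) :
    upperClosure {x | Minimal (· ∈ s) x} = upperClosure s := by
  ext m
  simp only [SetLike.mem_coe, mem_upperClosure, Set.mem_ofPred_eq]
  constructor
  · rintro ⟨n, hn, hnm⟩
    exact ⟨n, hn.prop, hnm⟩
  · rintro ⟨n, hn, hnm⟩
    obtain ⟨k, hkn, hk⟩ := exists_minimal_le_of_wellFoundedLT (· ∈ s) n hn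
    exact ⟨k, hk, hkn.trans hnm⟩

lemma Finset.exists_isAntichain_upperClosure_eq {α : Type*} [PartialOrder α] [WellFoundedLT α]
    (S : Finset α) :
    ∃ T : Finset α, IsAntichain (· ≤ ·) (T : Set α) ∧
      upperClosure (T : Set α) = upperClosure (S : Set α) := by
  classical
  have hT : ((S.filter (Minimal (· ∈ S)) : Finset α) : Set α) =
      {x | Minimal (· ∈ (S : Set α)) x} := by
    ext x
    simpa using fun hx : Minimal (· ∈ S) x => hx.prop
  refine ⟨S.filter (Minimal (· ∈ S)), ?_, ?_⟩ <;> rw [hT]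
  · exact setOfPred_minimal_antichain _
  · exact upperClosure_setOf_minimal _

lemma augUtility_congr {N L : Type*} [Fintype N] [PartialOrder N] [DecidableEq N]
    [DecidableRel ((· ≤ ·) : N → N → Prop)] [Fintype L]
    (A : L → Finset N) (d : L → ℕ) (β : ℝ) (p : L → ℝ) {S T : Finset N}
    (h : upperClosure (S : Set N) = upperClosure (T : Set N)) :
    augUtility A d β p S = augUtility A d β p T := by
  have hmem (m : N) : (∃ n ∈ S, n ≤ m) ↔ ∃ n ∈ T, n ≤ m := by
    simpa only [mem_upperClosure, Finset.mem_coe] using SetLike.ext_iff.mp h m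
  simp only [augUtility, hmem]

theorem max_over_antichains_general {N L : Type*} [Fintype N] [PartialOrder N] [DecidableEq N]
    [DecidableRel ((· ≤ ·) : N → N → Prop)] [Fintype L]
    (A : L → Finset N) (d : L → ℕ) (β : ℝ)
    (p : L → ℝ) :
    sSup (Set.range (augUtility A d β p)) =
      sSup (augUtility A d β p ''
        {S : Finset N | IsAntichain (· ≤ ·) (S : Set N)}) := by
  congr 1
  refine subset_antisymm ?_ (Set.image_subset_range _ _)
  rintro _ ⟨S, rfl⟩
  obtain ⟨T, hT, hTS⟩ := S.exists_isAntichain_upperClosure_eq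
  exact ⟨T, hT, augUtility_congr A d β p hTS⟩

/-- The maximization of expected `hF_β` utility over all subsets of nodes can be
restricted to the antichains (sets of mutually exclusive nodes): both maxima agree. -/
theorem max_over_antichains {N L : Type*} [Fintype N] [PartialOrder N] [DecidableEq N]
    [DecidableRel ((· ≤ ·) : N → N → Prop)] [Fintype L]
    (A : L → Finset N) (d : L → ℕ) (β : ℝ) (hβ : 0 < β)
    (p : L → ℝ) (hp : ∀ l, 0 ≤ p l) :
    sSup (Set.range (augUtility A d β p)) =
      sSup (augUtility A d β p ''
        {S : Finset N | IsAntichain (· ≤ ·) (S : Set N)}) :=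
  max_over_antichains_general A d β p
end

section
/- Let V be a finite type carrying a rooted tree structure given by a root r ∈ V and a parent map π : V → V with π(r) = r and, for every v ∈ V, some k ∈ ℕ with π^[k](v) = r; let A(v) = {π^[k](v) : k ∈ ℕ}. Let L ⊆ V be a finite set of leaves, let p : L → ℝ satisfy p(l) ≥ 0 for all l and Σ_{l∈L} p(l) = 1, and for n ∈ V set P(n) = Σ_{l∈L, n∈A(l)} p(l). Let c be a real number with 0 ≤ c < 1, and let DL : V → L → ℝ satisfy, for every n ≠ r and every l ∈ L: DL(n,l) = DL(π(n),l) − (1−c) if n ∈ A(l), and DL(n,l) = DL(π(n),l) + (1+c) if n ∉ A(l). Suppose n* ∈ V satisfies P(n*) > (1+c)/2 and P(m) < (1+c)/2 for every m ≠ n* with n* ∈ A(m). Then for every m ∈ V with m ≠ n*, Σ_{l∈L} p(l)·DL(m,l) > Σ_{l∈L} p(l)·DL(n*,l); that is, n* is the unique minimizer of expected generalized tree-distance loss over all nodes. -/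
open scoped Classical

/-!
Write `R n` for the expected loss of predicting `n` and `P n` for the probability of the subtree
below `n`. The recurrences give `R n = R (π n) + (1 + c) - 2 P n`, so moving from a node to its
parent lowers `R` exactly when `P n < (1 + c) / 2`. Since `P` grows along ancestors, `R` increases
strictly on the way from `n*` up to the root. Every other node `m` has `P m < (1 + c) / 2`: either
`m` lies below `n*`, or `m` and `n*` span disjoint sets of leaves, so that
`P m ≤ 1 - P n* < (1 - c) / 2`. Hence `R` decreases strictly along the path from any such `m`
up to the point where it meets the ancestors of `n*`.
-/

section RootedTree

variable {V : Type*} {π : V → V}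

variable (π) in
/-- `IsAncestor π n v` says that `n` lies on the path from `v` to the root (`v` included). -/
def IsAncestor (n v : V) : Prop := ∃ k : ℕ, π^[k] v = n

theorem IsAncestor.refl (v : V) : IsAncestor π v v := ⟨0, rfl⟩

theorem IsAncestor.trans {a b v : V} (hab : IsAncestor π a b) (hbv : IsAncestor π b v) :
    IsAncestor π a v := by
  obtain ⟨i, rfl⟩ := hab
  obtain ⟨j, rfl⟩ := hbv
  exact ⟨i + j, Function.iterate_add_apply π i j v⟩

theorem IsAncestor.total {a b v : V} (ha : IsAncestor π a v) (hb : IsAncestor π b v) :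
    IsAncestor π a b ∨ IsAncestor π b a := by
  obtain ⟨i, rfl⟩ := ha
  obtain ⟨j, rfl⟩ := hb
  rcases le_total i j with hij | hij
  · right
    exact ⟨j - i, by rw [← Function.iterate_add_apply, Nat.sub_add_cancel hij]⟩
  · left
    exact ⟨i - j, by rw [← Function.iterate_add_apply, Nat.sub_add_cancel hij]⟩

theorem eq_or_lt_of_isAncestor {E : V → ℝ} {n a : V}
    (hup : ∀ b, π b ≠ b → IsAncestor π b n → E b < E (π b)) (ha : IsAncestor π a n) :
    a = n ∨ E n < E a := by
  obtain ⟨k, rfl⟩ := ha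
  induction k with
  | zero => exact Or.inl rfl
  | succ k ih =>
    rw [Function.iterate_succ_apply']
    by_cases hfix : π (π^[k] n) = π^[k] n
    · rwa [hfix]
    · have hstep := hup _ hfix ⟨k, rfl⟩
      rcases ih with h | h
      · rw [h] at hstep ⊢
        exact Or.inr hstep
      · exact Or.inr (h.trans hstep)

theorem lt_of_decreasing_toward {E : V → ℝ} {r n : V} (hroot : ∀ v, IsAncestor π r v)
    (hup : ∀ b, π b ≠ b → IsAncestor π b n → E b < E (π b))
    (hdown : ∀ m, ¬ IsAncestor π m n → E (π m) < E m) {m : V} (hm : m ≠ n) :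
    E n < E m := by
  by_cases hmn : IsAncestor π m n
  · exact (eq_or_lt_of_isAncestor hup hmn).resolve_left hm
  obtain ⟨K, hK⟩ := hroot m
  clear hm
  induction K generalizing m with
  | zero => exact absurd ((show m = r from hK) ▸ hroot n) hmn
  | succ K ih =>
    have hE_le : E n ≤ E (π m) := by
      by_cases hpm : IsAncestor π (π m) n
      · rcases eq_or_lt_of_isAncestor hup hpm with h | h
        · exact h ▸ le_rfl
        · exact h.le
      · exact (ih hpm (by rwa [Function.iterate_succ_apply] at hK)).le
    exact hE_le.trans_lt (hdown m hmn)

end RootedTree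

section ExpectedLoss

variable {V : Type*} {L : Finset V} {p : V → ℝ} {π : V → V}

variable (L p π) in
noncomputable def subtreeMass (n : V) : ℝ := ∑ l ∈ L.filter (IsAncestor π n), p l

variable (L p) in
def expectedLoss (DL : V → V → ℝ) (n : V) : ℝ := ∑ l ∈ L, p l * DL n l

theorem subtreeMass_le_of_isAncestor (hp : ∀ l ∈ L, 0 ≤ p l) {a b : V}
    (hab : IsAncestor π b a) : subtreeMass L p π a ≤ subtreeMass L p π b := by
  refine Finset.sum_le_sum_of_subset_of_nonneg ?_ fun l hl _ => hp l (Finset.mem_filter.mp hl).1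
  intro l hl
  rw [Finset.mem_filter] at hl ⊢
  exact ⟨hl.1, hab.trans hl.2⟩

theorem subtreeMass_add_subtreeMass_le_one (hp : ∀ l ∈ L, 0 ≤ p l) (hpsum : ∑ l ∈ L, p l = 1)
    {a b : V} (hab : ¬ IsAncestor π a b) (hba : ¬ IsAncestor π b a) :
    subtreeMass L p π a + subtreeMass L p π b ≤ 1 := by
  have hdisj : Disjoint (L.filter (IsAncestor π a)) (L.filter (IsAncestor π b)) := by
    rw [Finset.disjoint_filter]
    intro l _ ha hb
    exact (ha.total hb).elim hab hba
  rw [subtreeMass, subtreeMass, ← Finset.sum_union hdisj, ← hpsum]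
  refine Finset.sum_le_sum_of_subset_of_nonneg ?_ fun l hl _ => hp l hl
  exact Finset.union_subset (Finset.filter_subset _ L) (Finset.filter_subset _ L)

theorem expectedLoss_eq_parent (hpsum : ∑ l ∈ L, p l = 1) {DL : V → V → ℝ} {c : ℝ} {n : V}
    (hin : ∀ l ∈ L, IsAncestor π n l → DL n l = DL (π n) l - (1 - c))
    (hout : ∀ l ∈ L, ¬ IsAncestor π n l → DL n l = DL (π n) l + (1 + c)) :
    expectedLoss L p DL n = expectedLoss L p DL (π n) + (1 + c) - 2 * subtreeMass L p π n := by
  have hterm : ∀ l ∈ L, p l * DL n l = p l * DL (π n) l + (1 + c) * p l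
      - 2 * (if IsAncestor π n l then p l else 0) := by
    intro l hl
    by_cases h : IsAncestor π n l
    · rw [hin l hl h, if_pos h]; ring
    · rw [hout l hl h, if_neg h]; ring
  rw [expectedLoss, Finset.sum_congr rfl hterm, Finset.sum_sub_distrib, Finset.sum_add_distrib,
    ← Finset.mul_sum, ← Finset.mul_sum, ← Finset.sum_filter, hpsum, mul_one]
  rfl

end ExpectedLoss

theorem generalized_tree_distance_optimal_general {V : Type*}
    (r : V) (π : V → V) (hr : π r = r) (hroot : ∀ v : V, ∃ k : ℕ, π^[k] v = r)
    (L : Finset V)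
    (p : V → ℝ) (hp : ∀ l ∈ L, 0 ≤ p l) (hpsum : ∑ l ∈ L, p l = 1)
    (c : ℝ) (hc0 : 0 ≤ c)
    (DL : V → V → ℝ)
    (hDLin : ∀ n, n ≠ r → ∀ l ∈ L, (∃ k : ℕ, π^[k] l = n) →
      DL n l = DL (π n) l - (1 - c))
    (hDLout : ∀ n, n ≠ r → ∀ l ∈ L, (¬ ∃ k : ℕ, π^[k] l = n) →
      DL n l = DL (π n) l + (1 + c))
    (nstar : V)
    (hstar : (1 + c) / 2 < ∑ l ∈ L.filter (fun l => ∃ k : ℕ, π^[k] l = nstar), p l)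
    (hdesc : ∀ m : V, m ≠ nstar → (∃ k : ℕ, π^[k] m = nstar) →
      ∑ l ∈ L.filter (fun l => ∃ k : ℕ, π^[k] l = m), p l < (1 + c) / 2) :
    ∀ m : V, m ≠ nstar →
      ∑ l ∈ L, p l * DL nstar l < ∑ l ∈ L, p l * DL m l := by
  have hstar' : (1 + c) / 2 < subtreeMass L p π nstar := hstar
  have hstep : ∀ n ≠ r, expectedLoss L p DL n
      = expectedLoss L p DL (π n) + (1 + c) - 2 * subtreeMass L p π n :=
    fun n hn => expectedLoss_eq_parent hpsum (hDLin n hn) (hDLout n hn)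
  intro m hm
  refine lt_of_decreasing_toward (E := expectedLoss L p DL) hroot (fun b hb hbn => ?_)
    (fun x hxn => ?_) hm
  · have hP := subtreeMass_le_of_isAncestor hp hbn
    have := hstep b (fun h => hb (h ▸ hr))
    linarith
  · have hxr : x ≠ r := fun h => hxn (h ▸ hroot nstar)
    have hP : subtreeMass L p π x < (1 + c) / 2 := by
      by_cases hdx : IsAncestor π nstar x
      · exact hdesc x (fun h => hxn (h ▸ IsAncestor.refl x)) hdx
      · have := subtreeMass_add_subtreeMass_le_one hp hpsum hxn hdx
        linarith
    have := hstep x hxr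
    linarith

/-- Optimal decision rule for the generalized tree-distance loss `DL_c`
(recovering Ramaswamy et al. 2015 for `c = 0` and Cao et al. 2024): the deepest node
whose probability exceeds `(1+c)/2` is the unique minimizer of the expected loss. -/
theorem generalized_tree_distance_optimal {V : Type*} [Fintype V] [DecidableEq V]
    (r : V) (π : V → V) (hr : π r = r) (hroot : ∀ v : V, ∃ k : ℕ, π^[k] v = r)
    (L : Finset V)
    (p : V → ℝ) (hp : ∀ l ∈ L, 0 ≤ p l) (hpsum : ∑ l ∈ L, p l = 1)
    (c : ℝ) (hc0 : 0 ≤ c) (hc1 : c < 1)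
    (DL : V → V → ℝ)
    (hDLin : ∀ n, n ≠ r → ∀ l ∈ L, (∃ k : ℕ, π^[k] l = n) →
      DL n l = DL (π n) l - (1 - c))
    (hDLout : ∀ n, n ≠ r → ∀ l ∈ L, (¬ ∃ k : ℕ, π^[k] l = n) →
      DL n l = DL (π n) l + (1 + c))
    (nstar : V)
    (hstar : (1 + c) / 2 < ∑ l ∈ L.filter (fun l => ∃ k : ℕ, π^[k] l = nstar), p l)
    (hdesc : ∀ m : V, m ≠ nstar → (∃ k : ℕ, π^[k] m = nstar) →
      ∑ l ∈ L.filter (fun l => ∃ k : ℕ, π^[k] l = m), p l < (1 + c) / 2) :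
    ∀ m : V, m ≠ nstar →
      ∑ l ∈ L, p l * DL nstar l < ∑ l ∈ L, p l * DL m l :=
  generalized_tree_distance_optimal_general r π hr hroot L p hp hpsum c hc0 DL hDLin hDLout nstar
    hstar hdesc
end
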